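/- arXiv:1902.09783 — 5 statements merged into one kernel-verified Lean document; each statement's English description precedes it below -/
import Mathlib

section
/- Let P = (X, Y, R) be a polarity and let f be an n-ary complete normal operator on the stable set lattice P⁺, i.e. for each coordinate i < n, every n-tuple A⃗ of stable sets and every (possibly empty) family {B_j}_{j∈J} of stable sets, f(A⃗[⋁_J B_j / i]) = ⋁_J f(A⃗[B_j / i]), where ⋁𝒞 = λ_R ρ_R(⋃𝒞) and A⃗[B/i] replaces the i-th entry of A⃗ by B. Define S_f ⊆ Xⁿ × Y by: x⃗ S_f y iff y ∈ ρ_R(f(⟨x₀⟩, …, ⟨x_{n−1}⟩)), where ⟨x⟩ = λ_R ρ_R {x}. Then for every n-tuple A⃗ of stable subsets of X, f(A⃗) = f_{S_f}(A⃗). -/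
/-!
Every stable set is the join of the principal stable sets `⟨x⟩ = λ_R ρ_R {x}` of its elements,
so completeness of `f` in the coordinate `i` gives
`ρ_R (f A⃗) = ⋂_{x ∈ A_i} ρ_R (f (A⃗[⟨x⟩/i]))`.
Replacing the coordinates by principal sets one at a time yields
`ρ_R (f A⃗) = ⋂_{x⃗ ∈ ∏ A⃗} ρ_R (f ⟨x⃗⟩)`, and applying `λ_R` to both sides, `f A⃗` being stable,
gives `f A⃗ = f_{S_f} A⃗`.
-/

/-- The right polar `ρ_R A = {y ∈ Y : ∀ x ∈ A, x R y}`. -/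
def rpolar {X Y : Type*} (R : X → Y → Prop) (A : Set X) : Set Y := {y | ∀ x ∈ A, R x y}

/-- The left polar `λ_R B = {x ∈ X : ∀ y ∈ B, x R y}`. -/
def lpolar {X Y : Type*} (R : X → Y → Prop) (B : Set Y) : Set X := {x | ∀ y ∈ B, R x y}

/-- `A ⊆ X` is stable if `A = λ_R (ρ_R A)`. -/
def StableX {X Y : Type*} (R : X → Y → Prop) (A : Set X) : Prop := A = lpolar R (rpolar R A)

/-- `B ⊆ Y` is stable if `B = ρ_R (λ_R B)`. -/
def StableY {X Y : Type*} (R : X → Y → Prop) (B : Set Y) : Prop := B = rpolar R (lpolar R B)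

/-- The quasi-order `≤₁` on `X`. -/
def le1 {X Y : Type*} (R : X → Y → Prop) (x x' : X) : Prop := rpolar R {x} ⊆ rpolar R {x'}

/-- The quasi-order `≤₂` on `Y`. -/
def le2 {X Y : Type*} (R : X → Y → Prop) (y y' : Y) : Prop := lpolar R {y} ⊆ lpolar R {y'}

/-- The operator `f_S` induced on stable sets by `S ⊆ Xⁿ × Y`. -/
def fS {X Y : Type*} {n : ℕ} (R : X → Y → Prop) (S : (Fin n → X) → Y → Prop)
    (A : Fin n → Set X) : Set X :=
  lpolar R {y | ∀ xs : Fin n → X, (∀ i, xs i ∈ A i) → S xs y}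

/-- The dual operator `g_T` induced on stable sets by `T ⊆ X × Yᵐ`. -/
def gT {X Y : Type*} {m : ℕ} (R : X → Y → Prop) (T : X → (Fin m → Y) → Prop)
    (A : Fin m → Set X) : Set X :=
  {x | ∀ ys : Fin m → Y, (∀ i, ys i ∈ rpolar R (A i)) → T x ys}

/-- All sections of `S ⊆ Xⁿ × Y` are stable. -/
def SSectionsStable {X Y : Type*} {n : ℕ} (R : X → Y → Prop)
    (S : (Fin n → X) → Y → Prop) : Prop :=
  (∀ xs : Fin n → X, StableY R {y | S xs y}) ∧
  (∀ (xs : Fin n → X) (i : Fin n) (y : Y), StableX R {x' | S (Function.update xs i x') y})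

/-- All sections of `T ⊆ X × Yᵐ` are stable. -/
def TSectionsStable {X Y : Type*} {m : ℕ} (R : X → Y → Prop)
    (T : X → (Fin m → Y) → Prop) : Prop :=
  (∀ ys : Fin m → Y, StableX R {x | T x ys}) ∧
  (∀ (x : X) (ys : Fin m → Y) (i : Fin m), StableY R {y' | T x (Function.update ys i y')})

open Function Set

section Polarity

variable {X Y : Type*} (R : X → Y → Prop)

theorem subset_lpolar_rpolar (A : Set X) : A ⊆ lpolar R (rpolar R A) :=
  subset_lowerPolar_upperPolar R A

theorem rpolar_lpolar_rpolar (A : Set X) : rpolar R (lpolar R (rpolar R A)) = rpolar R A :=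
  upperPolar_lowerPolar_upperPolar R A

theorem stableX_lpolar (B : Set Y) : StableX R (lpolar R B) :=
  (lowerPolar_upperPolar_lowerPolar R B).symm

variable {R}

theorem StableX.lpolar_rpolar_subset {A A' : Set X} (hA : StableX R A) (h : A' ⊆ A) :
    lpolar R (rpolar R A') ⊆ A :=
  Order.IsExtent.lowerPolar_upperPolar_subset (Order.isExtent_iff.2 hA.symm) h

theorem StableX.lpolar_rpolar_sUnion_principal {A : Set X} (hA : StableX R A) :
    lpolar R (rpolar R (⋃₀ ((fun x => lpolar R (rpolar R {x})) '' A))) = A := by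
  refine (hA.lpolar_rpolar_subset ?_).antisymm ?_
  · rintro _ ⟨_, ⟨x, hx, rfl⟩, hx'⟩
    exact hA.lpolar_rpolar_subset (singleton_subset_iff.2 hx) hx'
  · exact fun x hx =>
      subset_lpolar_rpolar R _ ⟨_, ⟨x, hx, rfl⟩, subset_lpolar_rpolar R _ rfl⟩

end Polarity

def IsCompleteOperator {X Y ι : Type*} [DecidableEq ι] (R : X → Y → Prop)
    (f : (ι → Set X) → Set X) : Prop :=
  ∀ (i : ι) (A : ι → Set X), (∀ j, StableX R (A j)) →
    ∀ 𝒞 : Set (Set X), (∀ B ∈ 𝒞, StableX R B) →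
      f (update A i (lpolar R (rpolar R (⋃₀ 𝒞)))) =
        lpolar R (rpolar R (⋃ B ∈ 𝒞, f (update A i B)))

namespace IsCompleteOperator

variable {X Y ι : Type*} [DecidableEq ι] {R : X → Y → Prop} {f : (ι → Set X) → Set X}
  {A : ι → Set X}

theorem mem_rpolar_iff_forall_update (hf : IsCompleteOperator R f)
    (hA : ∀ i, StableX R (A i)) (i : ι) (y : Y) :
    y ∈ rpolar R (f A) ↔
      ∀ x ∈ A i, y ∈ rpolar R (f (update A i (lpolar R (rpolar R {x})))) := by
  have h := hf i A hA ((fun x => lpolar R (rpolar R {x})) '' A i) <| by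
    rintro _ ⟨x, -, rfl⟩
    exact stableX_lpolar R _
  rw [(hA i).lpolar_rpolar_sUnion_principal, update_eq_self, biUnion_image] at h
  rw [h, rpolar_lpolar_rpolar]
  change y ∈ upperPolar R _ ↔ _
  rw [upperPolar_iUnion₂]
  exact mem_iInter₂

theorem mem_rpolar_iff_forall_piecewise (hf : IsCompleteOperator R f)
    (hA : ∀ i, StableX R (A i)) (s : Finset ι) (y : Y) :
    y ∈ rpolar R (f A) ↔ ∀ xs : ι → X, (∀ i, xs i ∈ A i) →
      y ∈ rpolar R (f (s.piecewise (fun i => lpolar R (rpolar R {xs i})) A)) := by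
  induction s using Finset.induction_on with
  | empty =>
    simp only [Finset.piecewise_empty]
    by_cases hne : ∀ i, (A i).Nonempty
    · exact ⟨fun hy _ _ => hy, fun hy => hy (fun i => (hne i).some) fun i => (hne i).some_mem⟩
    · -- Some `A i` is empty: the instance of completeness at `i` is then normality.
      push Not at hne
      obtain ⟨i, hi⟩ := hne
      simp [mem_rpolar_iff_forall_update hf hA i, hi]
  | insert j s hj ih =>
    have hstable (xs : ι → X) (i : ι) :
        StableX R (s.piecewise (fun i => lpolar R (rpolar R {xs i})) A i) :=
      s.piecewise_cases (π := fun _ => Set X) _ _ (StableX R) (stableX_lpolar R _) (hA i)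
    have hupdate (xs : ι → X) (x : X) :
        update (s.piecewise (fun i => lpolar R (rpolar R {xs i})) A) j (lpolar R (rpolar R {x})) =
          (insert j s).piecewise (fun i => lpolar R (rpolar R {update xs j x i})) A := by
      rw [Finset.piecewise_insert, update_self]
      congr 1
      refine s.piecewise_congr (fun i hi => ?_) fun _ _ => rfl
      rw [update_of_ne (ne_of_mem_of_not_mem hi hj)]
    have hj_entry (xs : ι → X) :
        s.piecewise (fun i => lpolar R (rpolar R {xs i})) A j = A j :=
      Finset.piecewise_eq_of_notMem _ _ _ hj
    rw [ih]
    refine ⟨fun hy xs hxs => ?_, fun hy xs hxs => ?_⟩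
    · have := (mem_rpolar_iff_forall_update hf (hstable xs) j y).1 (hy xs hxs) (xs j)
        (by rw [hj_entry]; exact hxs j)
      rwa [hupdate, update_eq_self] at this
    · refine (mem_rpolar_iff_forall_update hf (hstable xs) j y).2 fun x hx => ?_
      rw [hj_entry] at hx
      rw [hupdate]
      exact hy _ (forall_update_iff _ (p := fun i z => z ∈ A i) |>.2 ⟨hx, fun i _ => hxs i⟩)

theorem rpolar_apply_eq_setOf_principal [Fintype ι] (hf : IsCompleteOperator R f)
    (hA : ∀ i, StableX R (A i)) :
    rpolar R (f A) = {y | ∀ xs : ι → X, (∀ i, xs i ∈ A i) →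
      y ∈ rpolar R (f fun i => lpolar R (rpolar R {xs i}))} :=
  Set.ext fun y => by
    simpa only [Finset.piecewise_univ, mem_ofPred_eq] using
      hf.mem_rpolar_iff_forall_piecewise hA Finset.univ y

end IsCompleteOperator

/-- Every complete normal `n`-ary operator `f` on the stable set lattice `P⁺` of a
polarity is determined by the relation `S_f` defined by
`x⃗ S_f y  iff  y ∈ ρ_R (f ⟨x₀⟩ … ⟨x_{n−1}⟩)` where `⟨x⟩ = λ_R ρ_R {x}`:
for every tuple of stable sets, `f A⃗ = f_{S_f} A⃗`. -/
theorem stmt1 {X Y : Type*} {n : ℕ} (R : X → Y → Prop)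
    (f : (Fin n → Set X) → Set X)
    (hf_stable : ∀ A : Fin n → Set X, (∀ i, StableX R (A i)) → StableX R (f A))
    (hf_complete : ∀ (i : Fin n) (A : Fin n → Set X), (∀ j, StableX R (A j)) →
      ∀ 𝒞 : Set (Set X), (∀ B ∈ 𝒞, StableX R B) →
        f (Function.update A i (lpolar R (rpolar R (⋃₀ 𝒞)))) =
          lpolar R (rpolar R (⋃ B ∈ 𝒞, f (Function.update A i B))))
    (A : Fin n → Set X) (hA : ∀ i, StableX R (A i)) :
    f A = fS R
      (fun xs y => y ∈ rpolar R (f (fun i => lpolar R (rpolar R {xs i})))) A := by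
  calc f A = lpolar R (rpolar R (f A)) := hf_stable A hA
    _ = _ := by rw [IsCompleteOperator.rpolar_apply_eq_setOf_principal hf_complete hA]; rfl
end

section
/- Let P = (X, Y, R) be a polarity and S ⊆ Xⁿ × Y a relation all of whose sections are stable. Then: (a) f_S maps n-tuples of stable subsets of X to stable subsets of X; (b) f_S is a complete normal operator on P⁺: for each coordinate i < n, every n-tuple A⃗ of stable sets and every (possibly empty) family {B_j}_{j∈J} of stable sets, f_S(A⃗[⋁_J B_j / i]) = ⋁_J f_S(A⃗[B_j / i]), where ⋁𝒞 = λ_R ρ_R(⋃𝒞) and A⃗[B/i] replaces the i-th entry of A⃗ by B; (c) S equals the relation S_{f_S}, i.e. x⃗ S y iff y ∈ ρ_R(f_S(⟨x₀⟩, …, ⟨x_{n−1}⟩)), where ⟨x⟩ = λ_R ρ_R {x}. -/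
/-!
Every construction here lives in the concept lattice of `R`: stable subsets of `X` are Mathlib's
extents and stable subsets of `Y` its intents. Writing `S[A⃗, −]` for the set of `y` with `x⃗ S y`
for all `x⃗ ∈ A⃗`, we have `f_S A⃗ = λ_R S[A⃗, −]`. Stability of the `X`-sections lets one replace
any coordinate `Aᵢ` by its closure without changing `S[A⃗, −]`; stability of the `Y`-sections makes
`S[A⃗, −]` an intent. A join in coordinate `i` thus becomes an intersection of intents
`⋂_B S[A⃗[B/i], −]`, whose lower polar is the join of the `f_S(A⃗[B/i])`; and evaluating at the
closures of singletons recovers `S[x⃗, −]` itself.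
-/

open Set Function Order

section Polarity

variable {X Y : Type*} {R : X → Y → Prop}

theorem rpolar_eq_upperPolar (R : X → Y → Prop) : rpolar R = upperPolar R := rfl

theorem lpolar_eq_lowerPolar (R : X → Y → Prop) : lpolar R = lowerPolar R := rfl

theorem stableX_iff_isExtent {A : Set X} : StableX R A ↔ IsExtent R A :=
  ⟨fun h => ⟨_, h.symm⟩, fun h => h.eq.symm⟩

theorem stableY_iff_isIntent {B : Set Y} : StableY R B ↔ IsIntent R B :=
  ⟨fun h => ⟨_, h.symm⟩, fun h => h.eq.symm⟩

theorem lowerPolar_biInter_of_isIntent {ι : Type*} (𝒞 : Set ι) (F : ι → Set Y)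
    (hF : ∀ k ∈ 𝒞, IsIntent R (F k)) :
    lowerPolar R (⋂ k ∈ 𝒞, F k) = lowerPolar R (upperPolar R (⋃ k ∈ 𝒞, lowerPolar R (F k))) := by
  rw [upperPolar_iUnion₂, iInter₂_congr fun k hk => (hF k hk).eq]

end Polarity

section SetSection

variable {X Y ι : Type*} {R : X → Y → Prop} (S : (ι → X) → Y → Prop)

def setSection (A : ι → Set X) : Set Y :=
  {y | ∀ xs : ι → X, (∀ i, xs i ∈ A i) → S xs y}

theorem fS_eq_lowerPolar_setSection {n : ℕ} (S : (Fin n → X) → Y → Prop) (A : Fin n → Set X) :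
    fS R S A = lowerPolar R (setSection S A) := rfl

theorem setSection_singleton (xs : ι → X) : setSection S (fun i => {xs i}) = {y | S xs y} :=
  Subset.antisymm (fun _ hy => hy xs fun _ => rfl) fun _ hy _ hxs => (funext hxs : _ = xs) ▸ hy

theorem isIntent_setSection (hY : ∀ xs, IsIntent R {y | S xs y}) (A : ι → Set X) :
    IsIntent R (setSection S A) := by
  have : setSection S A = ⋂ xs ∈ univ.pi A, {y | S xs y} := by
    ext; simp [setSection, mem_pi]
  exact this ▸ IsIntent.iInter₂ _ fun xs _ => hY xs

variable [DecidableEq ι]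

theorem forall_mem_update_iff {A : ι → Set X} {xs : ι → X} {i : ι} {B : Set X} :
    (∀ j, xs j ∈ update A i B j) ↔ xs i ∈ B ∧ ∀ j ≠ i, xs j ∈ A j :=
  forall_update_iff A fun j Z => xs j ∈ Z

theorem setSection_update_sUnion (A : ι → Set X) (i : ι) (𝒞 : Set (Set X)) :
    setSection S (update A i (⋃₀ 𝒞)) = ⋂ B ∈ 𝒞, setSection S (update A i B) := by
  ext y
  simp only [setSection, mem_iInter₂, forall_mem_update_iff, mem_sUnion]
  exact ⟨fun h B hB xs hxs => h xs ⟨⟨B, hB, hxs.1⟩, hxs.2⟩,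
    fun h xs ⟨⟨B, hB, hxi⟩, hxs⟩ => h B hB xs ⟨hxi, hxs⟩⟩

theorem setSection_update_closure (hX : ∀ xs i y, IsExtent R {x' | S (update xs i x') y})
    (A : ι → Set X) (i : ι) (C : Set X) :
    setSection S (update A i (lowerPolar R (upperPolar R C))) = setSection S (update A i C) := by
  refine Subset.antisymm (fun y hy xs hxs => hy xs fun j => ?_) fun y hy xs hxs => ?_
  · rcases eq_or_ne j i with rfl | hj
    · simpa using subset_lowerPolar_upperPolar R C (by simpa using hxs j)
    · simpa [hj] using hxs j
  · rw [forall_mem_update_iff] at hxs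
    have hC : C ⊆ {x' | S (update xs i x') y} := fun c hc => hy _ fun j => by
      rcases eq_or_ne j i with rfl | hj
      · simpa using hc
      · simpa [hj] using hxs.2 j hj
    simpa using (hX xs i y).lowerPolar_upperPolar_subset hC hxs.1

theorem setSection_closure [Fintype ι] (hX : ∀ xs i y, IsExtent R {x' | S (update xs i x') y})
    (A : ι → Set X) :
    setSection S (fun i => lowerPolar R (upperPolar R (A i))) = setSection S A := by
  suffices ∀ s : Finset ι,
      setSection S (s.piecewise (fun i => lowerPolar R (upperPolar R (A i))) A) = setSection S A by
    simpa using this Finset.univ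
  intro s
  induction s using Finset.induction_on with
  | empty => simp
  | insert j s hj ih =>
    rw [Finset.piecewise_insert, setSection_update_closure S hX, ← ih,
      update_eq_self_iff.2 (Finset.piecewise_eq_of_notMem _ _ _ hj).symm]

theorem lowerPolar_setSection_update_closure_sUnion
    (hX : ∀ xs i y, IsExtent R {x' | S (update xs i x') y}) (hY : ∀ xs, IsIntent R {y | S xs y})
    (A : ι → Set X) (i : ι) (𝒞 : Set (Set X)) :
    lowerPolar R (setSection S (update A i (lowerPolar R (upperPolar R (⋃₀ 𝒞))))) =
      lowerPolar R (upperPolar R (⋃ B ∈ 𝒞, lowerPolar R (setSection S (update A i B)))) := by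
  rw [setSection_update_closure S hX, setSection_update_sUnion,
    lowerPolar_biInter_of_isIntent _ _ fun B _ => isIntent_setSection S hY _]

theorem upperPolar_lowerPolar_setSection_closure_singleton [Fintype ι]
    (hX : ∀ xs i y, IsExtent R {x' | S (update xs i x') y}) (hY : ∀ xs, IsIntent R {y | S xs y})
    (xs : ι → X) :
    upperPolar R (lowerPolar R (setSection S fun i => lowerPolar R (upperPolar R {xs i}))) =
      {y | S xs y} := by
  rw [setSection_closure S hX, setSection_singleton, (hY xs).eq]

end SetSection

/-- If all sections of `S ⊆ Xⁿ × Y` are stable, then `f_S` is a complete normal operator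
on the stable set lattice, and `S` equals the relation `S_{f_S}` it determines. -/
theorem stmt2 {X Y : Type*} {n : ℕ} (R : X → Y → Prop)
    (S : (Fin n → X) → Y → Prop) (hS : SSectionsStable R S) :
    -- (a) `f_S` maps tuples of stable sets to stable sets
    (∀ A : Fin n → Set X, (∀ i, StableX R (A i)) → StableX R (fS R S A)) ∧
    -- (b) `f_S` preserves arbitrary (including empty) joins in each coordinate
    (∀ (i : Fin n) (A : Fin n → Set X), (∀ j, StableX R (A j)) →
      ∀ 𝒞 : Set (Set X), (∀ B ∈ 𝒞, StableX R B) →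
        fS R S (Function.update A i (lpolar R (rpolar R (⋃₀ 𝒞)))) =
          lpolar R (rpolar R (⋃ B ∈ 𝒞, fS R S (Function.update A i B)))) ∧
    -- (c) `S = S_{f_S}`
    (∀ (xs : Fin n → X) (y : Y),
      S xs y ↔ y ∈ rpolar R (fS R S (fun i => lpolar R (rpolar R {xs i})))) := by
  have hX : ∀ xs i y, IsExtent R {x' | S (update xs i x') y} :=
    fun xs i y => stableX_iff_isExtent.1 (hS.2 xs i y)
  have hY : ∀ xs, IsIntent R {y | S xs y} := fun xs => stableY_iff_isIntent.1 (hS.1 xs)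
  refine ⟨fun A _ => stableX_iff_isExtent.2 isExtent_lowerPolar, fun i A _ 𝒞 _ => ?_,
    fun xs y => ?_⟩
  · exact lowerPolar_setSection_update_closure_sUnion S hX hY A i 𝒞
  · rw [rpolar_eq_upperPolar, fS_eq_lowerPolar_setSection, lpolar_eq_lowerPolar,
      upperPolar_lowerPolar_setSection_closure_singleton S hX hY]
    rfl
end

section
/- For any bounded morphism (α, β) between Ω-polarities P = (X, Y, R, S, T) and P′ = (X′, Y′, R′, S′, T′), the following are equivalent: (1) (α, β) preserves polarity, i.e. x R y implies α(x) R′ β(y); (2) α reflects quasi-order, i.e. α(x) ≤₁′ α(z) implies x ≤₁ z; (3) β reflects quasi-order, i.e. β(y) ≤₂′ β(w) implies y ≤₂ w. -/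
/-- A bounded morphism between plain polarities. -/
structure IsPolarityMorphism {X Y X' Y' : Type*} (R : X → Y → Prop) (R' : X' → Y' → Prop)
    (α : X → X') (β : Y → Y') : Prop where
  mono1 : ∀ ⦃x z : X⦄, le1 R x z → le1 R' (α x) (α z)
  mono2 : ∀ ⦃y w : Y⦄, le2 R y w → le2 R' (β y) (β w)
  backR : ∀ ⦃x : X⦄ ⦃y : Y⦄, R' (α x) (β y) → R x y
  forthR1 : ∀ ⦃x' : X'⦄ ⦃y : Y⦄, (∀ x : X, le1 R' x' (α x) → R x y) → R' x' (β y)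
  forthR2 : ∀ ⦃x : X⦄ ⦃y' : Y'⦄, (∀ y : Y, le2 R' y' (β y) → R x y) → R' (α x) y'

/-- A bounded morphism between Ω-polarities. -/
structure IsBddMorphism {X Y X' Y' : Type*} {n m : ℕ}
    (R : X → Y → Prop) (S : (Fin n → X) → Y → Prop) (T : X → (Fin m → Y) → Prop)
    (R' : X' → Y' → Prop) (S' : (Fin n → X') → Y' → Prop) (T' : X' → (Fin m → Y') → Prop)
    (α : X → X') (β : Y → Y') : Prop where
  mono1 : ∀ ⦃x z : X⦄, le1 R x z → le1 R' (α x) (α z)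
  mono2 : ∀ ⦃y w : Y⦄, le2 R y w → le2 R' (β y) (β w)
  backR : ∀ ⦃x : X⦄ ⦃y : Y⦄, R' (α x) (β y) → R x y
  forthR1 : ∀ ⦃x' : X'⦄ ⦃y : Y⦄, (∀ x : X, le1 R' x' (α x) → R x y) → R' x' (β y)
  forthR2 : ∀ ⦃x : X⦄ ⦃y' : Y'⦄, (∀ y : Y, le2 R' y' (β y) → R x y) → R' (α x) y'
  backS : ∀ ⦃xs : Fin n → X⦄ ⦃y : Y⦄, S' (fun i => α (xs i)) (β y) → S xs y
  forthS : ∀ ⦃xs' : Fin n → X'⦄ ⦃y : Y⦄,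
    (∀ xs : Fin n → X, (∀ i, le1 R' (xs' i) (α (xs i))) → S xs y) → S' xs' (β y)
  backT : ∀ ⦃x : X⦄ ⦃ys : Fin m → Y⦄, T' (α x) (fun i => β (ys i)) → T x ys
  forthT : ∀ ⦃x : X⦄ ⦃ys' : Fin m → Y'⦄,
    (∀ ys : Fin m → Y, (∀ i, le2 R' (ys' i) (β (ys i))) → T x ys) → T' (α x) ys'

/-!
If `(α, β)` preserves `R`, the back condition (1_R) pulls `α x ≤₁′ α z` back to `x ≤₁ z`.
Conversely, if `α` reflects `≤₁`, then for `x R y` every `x₀` with `α x ≤₁′ α x₀` satisfies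
`x ≤₁ x₀`, hence `x₀ R y`, and (2_R) at `x′ = α x` yields `α x R′ β y`. The case of `β` is dual,
using (3_R).
-/

theorem le1_iff {X Y : Type*} (R : X → Y → Prop) (a b : X) :
    le1 R a b ↔ ∀ y, R a y → R b y := by
  simp [le1, rpolar, Set.subset_def]

theorem le2_iff {X Y : Type*} (R : X → Y → Prop) (a b : Y) :
    le2 R a b ↔ ∀ x, R x a → R x b := by
  simp [le2, lpolar, Set.subset_def]

namespace IsPolarityMorphism

variable {X Y X' Y' : Type*} {R : X → Y → Prop} {R' : X' → Y' → Prop} {α : X → X'} {β : Y → Y'}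

theorem le1_of_map_le1 (h : IsPolarityMorphism R R' α β)
    (hR : ∀ x y, R x y → R' (α x) (β y)) {x z : X} (hle : le1 R' (α x) (α z)) : le1 R x z :=
  (le1_iff R x z).2 fun y hxy => h.backR ((le1_iff R' _ _).1 hle (β y) (hR x y hxy))

theorem le2_of_map_le2 (h : IsPolarityMorphism R R' α β)
    (hR : ∀ x y, R x y → R' (α x) (β y)) {y w : Y} (hle : le2 R' (β y) (β w)) : le2 R y w :=
  (le2_iff R y w).2 fun x hxy => h.backR ((le2_iff R' _ _).1 hle (α x) (hR x y hxy))

theorem map_rel_of_reflect_le1 (h : IsPolarityMorphism R R' α β)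
    (hα : ∀ x z, le1 R' (α x) (α z) → le1 R x z) {x : X} {y : Y} (hxy : R x y) :
    R' (α x) (β y) :=
  h.forthR1 fun x₀ hle => (le1_iff R x x₀).1 (hα x x₀ hle) y hxy

theorem map_rel_of_reflect_le2 (h : IsPolarityMorphism R R' α β)
    (hβ : ∀ y w, le2 R' (β y) (β w) → le2 R y w) {x : X} {y : Y} (hxy : R x y) :
    R' (α x) (β y) :=
  h.forthR2 fun y₀ hle => (le2_iff R y y₀).1 (hβ y y₀ hle) x hxy

theorem preserves_rel_iff_reflect_le1 (h : IsPolarityMorphism R R' α β) :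
    (∀ x y, R x y → R' (α x) (β y)) ↔ ∀ x z, le1 R' (α x) (α z) → le1 R x z :=
  ⟨fun hR _ _ => h.le1_of_map_le1 hR, fun hα _ _ => h.map_rel_of_reflect_le1 hα⟩

theorem preserves_rel_iff_reflect_le2 (h : IsPolarityMorphism R R' α β) :
    (∀ x y, R x y → R' (α x) (β y)) ↔ ∀ y w, le2 R' (β y) (β w) → le2 R y w :=
  ⟨fun hR _ _ => h.le2_of_map_le2 hR, fun hβ _ _ => h.map_rel_of_reflect_le2 hβ⟩

end IsPolarityMorphism

theorem IsBddMorphism.toIsPolarityMorphism {X Y X' Y' : Type*} {n m : ℕ}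
    {R : X → Y → Prop} {S : (Fin n → X) → Y → Prop} {T : X → (Fin m → Y) → Prop}
    {R' : X' → Y' → Prop} {S' : (Fin n → X') → Y' → Prop} {T' : X' → (Fin m → Y') → Prop}
    {α : X → X'} {β : Y → Y'} (h : IsBddMorphism R S T R' S' T' α β) :
    IsPolarityMorphism R R' α β :=
  ⟨h.mono1, h.mono2, h.backR, h.forthR1, h.forthR2⟩

theorem stmt9_general {X Y X' Y' : Type*} {n m : ℕ}
    (R : X → Y → Prop) (S : (Fin n → X) → Y → Prop) (T : X → (Fin m → Y) → Prop)
    (R' : X' → Y' → Prop) (S' : (Fin n → X') → Y' → Prop) (T' : X' → (Fin m → Y') → Prop)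
    (α : X → X') (β : Y → Y') (h : IsBddMorphism R S T R' S' T' α β) :
    ((∀ (x : X) (y : Y), R x y → R' (α x) (β y)) ↔
      (∀ x z : X, le1 R' (α x) (α z) → le1 R x z)) ∧
    ((∀ (x : X) (y : Y), R x y → R' (α x) (β y)) ↔
      (∀ y w : Y, le2 R' (β y) (β w) → le2 R y w)) :=
  ⟨h.toIsPolarityMorphism.preserves_rel_iff_reflect_le1,
    h.toIsPolarityMorphism.preserves_rel_iff_reflect_le2⟩

/-- For a bounded morphism of Ω-polarities, preserving the polarity relation `R`,
reflecting the quasi-order by `α`, and reflecting the quasi-order by `β` are all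
equivalent. -/
theorem stmt9 {X Y X' Y' : Type*} {n m : ℕ}
    (R : X → Y → Prop) (S : (Fin n → X) → Y → Prop) (T : X → (Fin m → Y) → Prop)
    (hS : SSectionsStable R S) (hT : TSectionsStable R T)
    (R' : X' → Y' → Prop) (S' : (Fin n → X') → Y' → Prop) (T' : X' → (Fin m → Y') → Prop)
    (hS' : SSectionsStable R' S') (hT' : TSectionsStable R' T')
    (α : X → X') (β : Y → Y') (h : IsBddMorphism R S T R' S' T' α β) :
    ((∀ (x : X) (y : Y), R x y → R' (α x) (β y)) ↔
      (∀ x z : X, le1 R' (α x) (α z) → le1 R x z)) ∧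
    ((∀ (x : X) (y : Y), R x y → R' (α x) (β y)) ↔
      (∀ y w : Y, le2 R' (β y) (β w) → le2 R y w)) :=
  stmt9_general R S T R' S' T' α β h
end

section
/- Let (α, β) : P → P′ be a bounded morphism between Ω-polarities such that α and β are injective and (α, β) preserves the relations R, S and T (x R y implies α(x) R′ β(y), x⃗ S y implies α(x⃗) S′ β(y), x T y⃗ implies α(x) T′ β(y⃗)). Then (α, β), viewed as a pair of maps into im(α, β) = (α[X], β[Y], R″, S″, T″) with the restricted relations, is an isomorphism of Ω-polarities from P onto im(α, β): it is a bounded morphism possessing an inverse bounded morphism. -/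
/-- The polarity relation of the image structure `im(α, β)`, on the images of `α` and `β`. -/
def imR {X Y X' Y' : Type*} (R' : X' → Y' → Prop) (α : X → X') (β : Y → Y') :
    ↥(Set.range α) → ↥(Set.range β) → Prop :=
  fun x y => R' x.val y.val

/-- The `S`-relation of the image structure `im(α, β)`. -/
def imS {X Y X' Y' : Type*} {n : ℕ} (S' : (Fin n → X') → Y' → Prop)
    (α : X → X') (β : Y → Y') :
    (Fin n → ↥(Set.range α)) → ↥(Set.range β) → Prop :=
  fun xs y => S' (fun i => (xs i).val) y.val

/-- The `T`-relation of the image structure `im(α, β)`. -/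
def imT {X Y X' Y' : Type*} {m : ℕ} (T' : X' → (Fin m → Y') → Prop)
    (α : X → X') (β : Y → Y') :
    ↥(Set.range α) → (Fin m → ↥(Set.range β)) → Prop :=
  fun x ys => T' x.val (fun i => (ys i).val)

/-!
An injective morphism that both preserves and reflects `R`, `S` and `T` is a bijection onto
its image which carries each relation exactly onto its restriction. Any such relation-preserving
bijection is a bounded morphism, because the back-and-forth conditions can be met by pulling
the given point back along the inverse map, where `≤₁`, `≤₂` are reflexive; the inverse bijection
has the same property, so it is a bounded morphism as well.
-/

section Polarity

variable {X Y : Type*} (R : X → Y → Prop)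

lemma le1_iff_forall (x z : X) : le1 R x z ↔ ∀ y, R x y → R z y :=
  ⟨fun hle _ hxy => hle (fun _ ha => ha ▸ hxy) z rfl,
    fun hall y hy _ ha => ha ▸ hall y (hy x rfl)⟩

lemma le2_iff_forall (y w : Y) : le2 R y w ↔ ∀ x, R x y → R x w :=
  ⟨fun hle _ hxy => hle (fun _ ha => ha ▸ hxy) w rfl,
    fun hall x hx _ ha => ha ▸ hall x (hx y rfl)⟩

lemma le1_refl (x : X) : le1 R x x := subset_rfl

lemma le2_refl (y : Y) : le2 R y y := subset_rfl

end Polarity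

section RelationIso

variable {X Y X₂ Y₂ : Type*} {n m : ℕ}
  {R : X → Y → Prop} {S : (Fin n → X) → Y → Prop} {T : X → (Fin m → Y) → Prop}
  {R₂ : X₂ → Y₂ → Prop} {S₂ : (Fin n → X₂) → Y₂ → Prop} {T₂ : X₂ → (Fin m → Y₂) → Prop}
  {e : X ≃ X₂} {f : Y ≃ Y₂}

structure IsRelationIso (R : X → Y → Prop) (S : (Fin n → X) → Y → Prop)
    (T : X → (Fin m → Y) → Prop) (R₂ : X₂ → Y₂ → Prop) (S₂ : (Fin n → X₂) → Y₂ → Prop)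
    (T₂ : X₂ → (Fin m → Y₂) → Prop) (e : X ≃ X₂) (f : Y ≃ Y₂) : Prop where
  rel_iff : ∀ x y, R₂ (e x) (f y) ↔ R x y
  relS_iff : ∀ xs y, S₂ (fun i => e (xs i)) (f y) ↔ S xs y
  relT_iff : ∀ x ys, T₂ (e x) (fun i => f (ys i)) ↔ T x ys

namespace IsRelationIso

lemma symm (h : IsRelationIso R S T R₂ S₂ T₂ e f) :
    IsRelationIso R₂ S₂ T₂ R S T e.symm f.symm where
  rel_iff x₂ y₂ := by
    simpa only [Equiv.apply_symm_apply] using (h.rel_iff (e.symm x₂) (f.symm y₂)).symm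
  relS_iff xs₂ y₂ := by
    simpa only [Equiv.apply_symm_apply] using
      (h.relS_iff (fun i => e.symm (xs₂ i)) (f.symm y₂)).symm
  relT_iff x₂ ys₂ := by
    simpa only [Equiv.apply_symm_apply] using
      (h.relT_iff (e.symm x₂) (fun i => f.symm (ys₂ i))).symm

lemma le1_iff (h : IsRelationIso R S T R₂ S₂ T₂ e f) (x z : X) :
    le1 R₂ (e x) (e z) ↔ le1 R x z := by
  rw [le1_iff_forall, le1_iff_forall, ← f.forall_congr_right]
  simp only [h.rel_iff]

lemma le2_iff (h : IsRelationIso R S T R₂ S₂ T₂ e f) (y w : Y) :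
    le2 R₂ (f y) (f w) ↔ le2 R y w := by
  rw [le2_iff_forall, le2_iff_forall, ← e.forall_congr_right]
  simp only [h.rel_iff]

theorem isBddMorphism (h : IsRelationIso R S T R₂ S₂ T₂ e f) :
    IsBddMorphism R S T R₂ S₂ T₂ e f where
  mono1 x z := (h.le1_iff x z).2
  mono2 y w := (h.le2_iff y w).2
  backR x y := (h.rel_iff x y).1
  forthR1 x₂ y hyp := by
    simpa only [Equiv.apply_symm_apply] using
      (h.rel_iff _ y).2 (hyp (e.symm x₂) (by simpa using le1_refl R₂ x₂))
  forthR2 x y₂ hyp := by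
    simpa only [Equiv.apply_symm_apply] using
      (h.rel_iff x _).2 (hyp (f.symm y₂) (by simpa using le2_refl R₂ y₂))
  backS xs y := (h.relS_iff xs y).1
  forthS xs₂ y hyp := by
    simpa only [Equiv.apply_symm_apply] using
      (h.relS_iff _ y).2 (hyp (fun i => e.symm (xs₂ i)) fun i => by simpa using le1_refl R₂ _)
  backT x ys := (h.relT_iff x ys).1
  forthT x ys₂ hyp := by
    simpa only [Equiv.apply_symm_apply] using
      (h.relT_iff x _).2 (hyp (fun i => f.symm (ys₂ i)) fun i => by simpa using le2_refl R₂ _)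

end IsRelationIso

end RelationIso

theorem isRelationIso_ofInjective {X Y X' Y' : Type*} {n m : ℕ}
    {R : X → Y → Prop} {S : (Fin n → X) → Y → Prop} {T : X → (Fin m → Y) → Prop}
    {R' : X' → Y' → Prop} {S' : (Fin n → X') → Y' → Prop} {T' : X' → (Fin m → Y') → Prop}
    {α : X → X'} {β : Y → Y'} (hα : Function.Injective α) (hβ : Function.Injective β)
    (hR : ∀ x y, R' (α x) (β y) ↔ R x y)
    (hS : ∀ xs y, S' (fun i => α (xs i)) (β y) ↔ S xs y)
    (hT : ∀ x ys, T' (α x) (fun i => β (ys i)) ↔ T x ys) :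
    IsRelationIso R S T (imR R' α β) (imS S' α β) (imT T' α β)
      (Equiv.ofInjective α hα) (Equiv.ofInjective β hβ) :=
  ⟨hR, hS, hT⟩

theorem stmt13_general {X Y X' Y' : Type*} {n m : ℕ}
    (R : X → Y → Prop) (S : (Fin n → X) → Y → Prop) (T : X → (Fin m → Y) → Prop)
    (R' : X' → Y' → Prop) (S' : (Fin n → X') → Y' → Prop) (T' : X' → (Fin m → Y') → Prop)
    (α : X → X') (β : Y → Y') (h : IsBddMorphism R S T R' S' T' α β)
    (hαinj : Function.Injective α) (hβinj : Function.Injective β)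
    (hpresR : ∀ (x : X) (y : Y), R x y → R' (α x) (β y))
    (hpresS : ∀ (xs : Fin n → X) (y : Y), S xs y → S' (fun i => α (xs i)) (β y))
    (hpresT : ∀ (x : X) (ys : Fin m → Y), T x ys → T' (α x) (fun i => β (ys i))) :
    IsBddMorphism R S T (imR R' α β) (imS S' α β) (imT T' α β)
      (fun x => (⟨α x, Set.mem_range_self x⟩ : ↥(Set.range α)))
      (fun y => (⟨β y, Set.mem_range_self y⟩ : ↥(Set.range β))) ∧
    ∃ (α' : ↥(Set.range α) → X) (β' : ↥(Set.range β) → Y),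
      IsBddMorphism (imR R' α β) (imS S' α β) (imT T' α β) R S T α' β' ∧
      (∀ x : X, α' ⟨α x, Set.mem_range_self x⟩ = x) ∧
      (∀ y : Y, β' ⟨β y, Set.mem_range_self y⟩ = y) ∧
      (∀ x' : ↥(Set.range α), α (α' x') = x'.val) ∧
      (∀ y' : ↥(Set.range β), β (β' y') = y'.val) := by
  have iso := isRelationIso_ofInjective hαinj hβinj
    (fun x y => ⟨@h.backR x y, hpresR x y⟩) (fun xs y => ⟨@h.backS xs y, hpresS xs y⟩)
    (fun x ys => ⟨@h.backT x ys, hpresT x ys⟩)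
  exact ⟨iso.isBddMorphism, _, _, iso.symm.isBddMorphism,
    Equiv.ofInjective_symm_apply hαinj, Equiv.ofInjective_symm_apply hβinj,
    Equiv.apply_ofInjective_symm hαinj, Equiv.apply_ofInjective_symm hβinj⟩

/-- If the components of a bounded morphism `(α, β)` of Ω-polarities are injective and
preserve the relations `R`, `S` and `T`, then `(α, β)`, corestricted to the image
structure `im(α, β)`, is an isomorphism of Ω-polarities: a bounded morphism with a
two-sided inverse bounded morphism. -/
theorem stmt13 {X Y X' Y' : Type*} {n m : ℕ}
    (R : X → Y → Prop) (S : (Fin n → X) → Y → Prop) (T : X → (Fin m → Y) → Prop)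
    (hS : SSectionsStable R S) (hT : TSectionsStable R T)
    (R' : X' → Y' → Prop) (S' : (Fin n → X') → Y' → Prop) (T' : X' → (Fin m → Y') → Prop)
    (hS' : SSectionsStable R' S') (hT' : TSectionsStable R' T')
    (α : X → X') (β : Y → Y') (h : IsBddMorphism R S T R' S' T' α β)
    (hαinj : Function.Injective α) (hβinj : Function.Injective β)
    (hpresR : ∀ (x : X) (y : Y), R x y → R' (α x) (β y))
    (hpresS : ∀ (xs : Fin n → X) (y : Y), S xs y → S' (fun i => α (xs i)) (β y))
    (hpresT : ∀ (x : X) (ys : Fin m → Y), T x ys → T' (α x) (fun i => β (ys i))) :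
    IsBddMorphism R S T (imR R' α β) (imS S' α β) (imT T' α β)
      (fun x => (⟨α x, Set.mem_range_self x⟩ : ↥(Set.range α)))
      (fun y => (⟨β y, Set.mem_range_self y⟩ : ↥(Set.range β))) ∧
    ∃ (α' : ↥(Set.range α) → X) (β' : ↥(Set.range β) → Y),
      IsBddMorphism (imR R' α β) (imS S' α β) (imT T' α β) R S T α' β' ∧
      (∀ x : X, α' ⟨α x, Set.mem_range_self x⟩ = x) ∧
      (∀ y : Y, β' ⟨β y, Set.mem_range_self y⟩ = y) ∧
      (∀ x' : ↥(Set.range α), α (α' x') = x'.val) ∧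
      (∀ y' : ↥(Set.range β), β (β' y') = y'.val) :=
  stmt13_general R S T R' S' T' α β h hαinj hβinj hpresR hpresS hpresT
end

section
/- Let L be a bounded lattice, f : Lⁿ → L a normal operator and g : Lᵐ → L a normal dual operator. Then in the canonical polarity (𝓕_L, 𝓘_L, ⋔), all sections of the relation S_L and all sections of the relation T_L are stable; hence the canonical structure L₊ = (𝓕_L, 𝓘_L, ⋔, S_L, T_L) is an Ω-polarity. -/
/-- A nonempty lattice filter: nonempty, upward closed, closed under binary meets. -/
def IsLatFilter {L : Type*} [Lattice L] (F : Set L) : Prop :=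
  F.Nonempty ∧ (∀ ⦃a b : L⦄, a ∈ F → a ≤ b → b ∈ F) ∧ (∀ ⦃a b : L⦄, a ∈ F → b ∈ F → a ⊓ b ∈ F)

/-- A nonempty lattice ideal: nonempty, downward closed, closed under binary joins. -/
def IsLatIdeal {L : Type*} [Lattice L] (D : Set L) : Prop :=
  D.Nonempty ∧ (∀ ⦃a b : L⦄, a ∈ D → b ≤ a → b ∈ D) ∧ (∀ ⦃a b : L⦄, a ∈ D → b ∈ D → a ⊔ b ∈ D)

/-- The set `𝓕_L` of nonempty filters of `L`. -/
abbrev Filt (L : Type*) [Lattice L] := {F : Set L // IsLatFilter F}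

/-- The set `𝓘_L` of nonempty ideals of `L`. -/
abbrev Idl (L : Type*) [Lattice L] := {D : Set L // IsLatIdeal D}

/-- The canonical polarity relation: `F ⋔ D` iff `F ∩ D ≠ ∅`. -/
def canR {L : Type*} [Lattice L] (F : Filt L) (D : Idl L) : Prop := (F.val ∩ D.val).Nonempty
/-- The canonical relation `S_L` on filters/ideals determined by an operator `f`. -/
def SL {L : Type*} [Lattice L] {n : ℕ} (f : (Fin n → L) → L) :
    (Fin n → Filt L) → Idl L → Prop :=
  fun Fs D => ∃ a : Fin n → L, (∀ i, a i ∈ (Fs i).val) ∧ f a ∈ D.val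

/-- The canonical relation `T_L` on filters/ideals determined by a dual operator `g`. -/
def TL {L : Type*} [Lattice L] {m : ℕ} (g : (Fin m → L) → L) :
    Filt L → (Fin m → Idl L) → Prop :=
  fun F Ds => ∃ a : Fin m → L, (∀ i, a i ∈ (Ds i).val) ∧ g a ∈ F.val

/-!
Each section of `S_L` or `T_L` is the set of filters (resp. ideals) meeting one fixed ideal
(resp. filter), and every set of the form `{x | x R y}` or `{y | x R y}` is stable. For
`S_L[F⃗, -]` the fixed filter is the one generated by `f[F⃗]`; for `S_L[F⃗[-]_i, D]` it is the ideal
of those `b` with `f(a⃗[b/i]) ∈ D` for some `a⃗ ∈ F⃗`, which is closed under joins because `f`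
preserves joins in the `i`-th coordinate and nonempty because `f(a⃗[⊥/i]) = ⊥`. The statements
about `T_L` are the statements about `S_L` for the order dual.
-/

open Function

section Polarity

variable {X Y : Type*} {R : X → Y → Prop}

theorem stableX_setOf_rel (y : Y) : StableX R {x | R x y} :=
  Set.Subset.antisymm (fun _ hx _ hy => hy _ hx) (fun _ hx => hx y fun _ h => h)

theorem stableY_setOf_rel (x : X) : StableY R {y | R x y} :=
  Set.Subset.antisymm (fun _ hy _ hx => hx _ hy) (fun _ hy => hy x fun _ h => h)

theorem tSectionsStable_iff_sSectionsStable_flip {m : ℕ} {T : X → (Fin m → Y) → Prop} :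
    TSectionsStable R T ↔ SSectionsStable (flip R) (fun ys x => T x ys) :=
  ⟨fun h => ⟨h.1, fun ys i x => h.2 x ys i⟩, fun h => ⟨h.1, fun x ys i => h.2 ys i x⟩⟩

end Polarity

theorem monotone_of_monotone_update {ι α β : Type*} [Fintype ι] [DecidableEq ι]
    [Preorder α] [Preorder β] {f : (ι → α) → β}
    (hf : ∀ i a, Monotone fun b => f (update a i b)) : Monotone f := by
  intro a b hab
  have key : ∀ s : Finset ι, f a ≤ f (s.piecewise b a) := by
    intro s
    induction s using Finset.induction_on with
    | empty => simp
    | insert j s hj ih =>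
      rw [Finset.piecewise_insert]
      calc f a ≤ f (s.piecewise b a) := ih
        _ = f (update (s.piecewise b a) j (a j)) := by
          rw [← Finset.piecewise_eq_of_notMem s b a hj, update_eq_self]
        _ ≤ _ := hf j _ (hab j)
  simpa using key Finset.univ

theorem monotone_of_update_sup {ι L β : Type*} [Fintype ι] [DecidableEq ι]
    [Lattice L] [SemilatticeSup β] {f : (ι → L) → β}
    (hf : ∀ i a b c, f (update a i (b ⊔ c)) = f (update a i b) ⊔ f (update a i c)) :
    Monotone f :=
  monotone_of_monotone_update fun i a b c hbc =>
    calc f (update a i b) ≤ f (update a i b) ⊔ f (update a i c) := le_sup_left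
      _ = f (update a i c) := by rw [← hf, sup_of_le_right hbc]

section CanonicalPolarity

variable {L : Type*} [Lattice L] {n : ℕ}

theorem forall_update_mem_update_iff {ι : Type*} [DecidableEq ι] {Fs : ι → Filt L}
    {a : ι → L} {i : ι} {b : L} {F : Filt L} :
    (∀ j, update a i b j ∈ (update Fs i F j).val) ↔ b ∈ F.val ∧ ∀ j ≠ i, a j ∈ (Fs j).val := by
  refine ⟨fun h => ⟨by simpa using h i, fun j hj => by simpa [hj] using h j⟩, ?_⟩
  rintro ⟨hb, ha⟩ j
  rcases eq_or_ne j i with rfl | hj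
  · simpa using hb
  · simpa [hj] using ha j hj

def imageFilt (f : (Fin n → L) → L) (hf : Monotone f) (Fs : Fin n → Filt L) : Filt L :=
  ⟨{x | ∃ a : Fin n → L, (∀ i, a i ∈ (Fs i).val) ∧ f a ≤ x}, by
    refine ⟨⟨_, fun i => (Fs i).2.1.some, fun i => (Fs i).2.1.some_mem, le_rfl⟩, ?_, ?_⟩
    · rintro x y ⟨a, ha, hax⟩ hxy
      exact ⟨a, ha, hax.trans hxy⟩
    · rintro x y ⟨a, ha, hax⟩ ⟨b, hb, hby⟩
      exact ⟨a ⊓ b, fun i => (Fs i).2.2.2 (ha i) (hb i),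
        le_inf ((hf inf_le_left).trans hax) ((hf inf_le_right).trans hby)⟩⟩

def sectionIdl [OrderBot L] (f : (Fin n → L) → L)
    (hf_join : ∀ (i : Fin n) (a : Fin n → L) (b c : L),
      f (update a i (b ⊔ c)) = f (update a i b) ⊔ f (update a i c))
    (hf_bot : ∀ (i : Fin n) (a : Fin n → L), f (update a i ⊥) = ⊥)
    (Fs : Fin n → Filt L) (i : Fin n) (D : Idl L) : Idl L :=
  ⟨{b | ∃ a : Fin n → L, (∀ j ≠ i, a j ∈ (Fs j).val) ∧ f (update a i b) ∈ D.val}, by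
    have hf := monotone_of_update_sup hf_join
    refine ⟨⟨⊥, fun j => (Fs j).2.1.some, fun j _ => (Fs j).2.1.some_mem, ?_⟩, ?_, ?_⟩
    · rw [hf_bot]
      exact D.2.2.1 D.2.1.some_mem bot_le
    · rintro b c ⟨a, ha, hab⟩ hcb
      exact ⟨a, ha, D.2.2.1 hab (hf (update_le_update_iff'.2 hcb))⟩
    · rintro b c ⟨a, ha, hab⟩ ⟨a', ha', hac⟩
      refine ⟨a ⊓ a', fun j hj => (Fs j).2.2.2 (ha j hj) (ha' j hj), ?_⟩
      rw [hf_join]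
      refine D.2.2.2 (D.2.2.1 hab (hf ?_)) (D.2.2.1 hac (hf ?_)) <;>
        exact update_le_update_iff.2 ⟨le_rfl, fun j _ => by simp⟩⟩

theorem SL_iff_canR_imageFilt (f : (Fin n → L) → L) (hf : Monotone f) (Fs : Fin n → Filt L)
    (D : Idl L) : SL f Fs D ↔ canR (imageFilt f hf Fs) D := by
  constructor
  · rintro ⟨a, ha, hfa⟩
    exact ⟨f a, ⟨a, ha, le_rfl⟩, hfa⟩
  · rintro ⟨x, ⟨a, ha, hax⟩, hxD⟩
    exact ⟨a, ha, D.2.2.1 hxD hax⟩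

theorem SL_update_iff_canR_sectionIdl [OrderBot L] (f : (Fin n → L) → L)
    (hf_join : ∀ (i : Fin n) (a : Fin n → L) (b c : L),
      f (update a i (b ⊔ c)) = f (update a i b) ⊔ f (update a i c))
    (hf_bot : ∀ (i : Fin n) (a : Fin n → L), f (update a i ⊥) = ⊥)
    (Fs : Fin n → Filt L) (i : Fin n) (F : Filt L) (D : Idl L) :
    SL f (update Fs i F) D ↔ canR F (sectionIdl f hf_join hf_bot Fs i D) := by
  constructor
  · rintro ⟨a, ha, hfa⟩
    rw [← update_eq_self i a, forall_update_mem_update_iff] at ha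
    exact ⟨a i, ha.1, a, ha.2, by rwa [update_eq_self]⟩
  · rintro ⟨b, hbF, a, ha, hfa⟩
    exact ⟨update a i b, forall_update_mem_update_iff.2 ⟨hbF, ha⟩, hfa⟩

theorem sSectionsStable_SL [OrderBot L] (f : (Fin n → L) → L)
    (hf_join : ∀ (i : Fin n) (a : Fin n → L) (b c : L),
      f (update a i (b ⊔ c)) = f (update a i b) ⊔ f (update a i c))
    (hf_bot : ∀ (i : Fin n) (a : Fin n → L), f (update a i ⊥) = ⊥) :
    SSectionsStable canR (SL f) := by
  refine ⟨fun Fs => ?_, fun Fs i D => ?_⟩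
  · simpa only [SL_iff_canR_imageFilt f (monotone_of_update_sup hf_join)] using
      stableY_setOf_rel (imageFilt f _ Fs)
  · simpa only [SL_update_iff_canR_sectionIdl f hf_join hf_bot] using
      stableX_setOf_rel (sectionIdl f hf_join hf_bot Fs i D)

/- The filters of `Lᵒᵈ` are, definitionally, the ideals of `L` and vice versa; only the order of
the intersection in `canR` has to be swapped. -/
theorem canR_orderDual : canR (L := Lᵒᵈ) = flip (canR (L := L)) := by
  ext D F
  exact iff_of_eq (congrArg Set.Nonempty (Set.inter_comm D.val F.val))

theorem tSectionsStable_TL [OrderTop L] {m : ℕ} (g : (Fin m → L) → L)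
    (hg_meet : ∀ (i : Fin m) (a : Fin m → L) (b c : L),
      g (update a i (b ⊓ c)) = g (update a i b) ⊓ g (update a i c))
    (hg_top : ∀ (i : Fin m) (a : Fin m → L), g (update a i ⊤) = ⊤) :
    TSectionsStable canR (TL g) := by
  have h := sSectionsStable_SL (L := Lᵒᵈ) g hg_meet hg_top
  rw [canR_orderDual] at h
  exact tSectionsStable_iff_sSectionsStable_flip.2 h

end CanonicalPolarity

/-- For a normal operator `f` and normal dual operator `g` on a bounded lattice `L`,
all sections of the canonical relations `S_L` and `T_L` are stable in the canonical
polarity `(𝓕_L, 𝓘_L, ⋔)`; hence the canonical structure `L₊` is an Ω-polarity. -/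
theorem stmt15 {L : Type*} [Lattice L] [BoundedOrder L] {n m : ℕ}
    (f : (Fin n → L) → L)
    (hf_join : ∀ (i : Fin n) (a : Fin n → L) (b c : L),
      f (Function.update a i (b ⊔ c)) = f (Function.update a i b) ⊔ f (Function.update a i c))
    (hf_bot : ∀ (i : Fin n) (a : Fin n → L), f (Function.update a i ⊥) = ⊥)
    (g : (Fin m → L) → L)
    (hg_meet : ∀ (i : Fin m) (a : Fin m → L) (b c : L),
      g (Function.update a i (b ⊓ c)) = g (Function.update a i b) ⊓ g (Function.update a i c))
    (hg_top : ∀ (i : Fin m) (a : Fin m → L), g (Function.update a i ⊤) = ⊤) :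
    SSectionsStable (canR (L := L)) (SL f) ∧ TSectionsStable (canR (L := L)) (TL g) :=
  ⟨sSectionsStable_SL f hf_join hf_bot, tSectionsStable_TL g hg_meet hg_top⟩
end
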